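/- Let R be a commutative ring that is also a ℚ-algebra, and let {·,·} : R × R → R be a bilinear map that is antisymmetric and satisfies the Leibniz rule in each argument. Let N be a nonzero rational number, and let (I_n)_{n≥1}, (J_n)_{n≥1} be elements of R satisfying {I_n, I_m} = 0, {J_n, I_m} = (n+m−1)·I_{n+m−1}, and {J_n, J_m} = (m−n)·J_{n+m−1} for all n, m ≥ 1. Define q₀ = J₁ and J̃_{n+1} = J_{n+1} − (n/N)·q₀·I_n for n ≥ 1. Then for all n, m ≥ 1: {J̃_{n+1}, J̃_{m+1}} = (m−n)·J̃_{m+n+1} + (mn/N)·( J̃_{n+1}·I_m − J̃_{m+1}·I_n ). -/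
import Mathlib


/-- Decoupling of the center-of-mass position in the second Poisson
structure of the rational Calogero–Moser model: the `{J̃, J̃}` bracket.
The bracket is a ℚ-bilinear map on a commutative ℚ-algebra `R`, antisymmetric and
satisfying the Leibniz rule in each argument. -/
theorem stmt1 (R : Type*) [CommRing R] [Algebra ℚ R]
    (br : R →ₗ[ℚ] R →ₗ[ℚ] R)
    (br_anti : ∀ x y : R, br x y = - br y x)
    (br_leibniz_right : ∀ x y z : R, br x (y * z) = y * br x z + br x y * z)
    (br_leibniz_left : ∀ x y z : R, br (x * y) z = x * br y z + br x z * y)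
    (N : ℚ) (hN : N ≠ 0)
    (I J : ℕ → R)
    (hII : ∀ n m : ℕ, 1 ≤ n → 1 ≤ m → br (I n) (I m) = 0)
    (hJI : ∀ n m : ℕ, 1 ≤ n → 1 ≤ m →
      br (J n) (I m) = ((n + m - 1 : ℕ) : R) * I (n + m - 1))
    (hJJ : ∀ n m : ℕ, 1 ≤ n → 1 ≤ m →
      br (J n) (J m) = (((m : ℤ) - (n : ℤ) : ℤ) : R) * J (n + m - 1))
    (q₀ : R) (hq₀ : q₀ = J 1)
    (Jt : ℕ → R)
    (hJt : ∀ n : ℕ, 1 ≤ n → Jt (n + 1) = J (n + 1) - ((n : ℚ) / N) • (q₀ * I n)) :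
    ∀ n m : ℕ, 1 ≤ n → 1 ≤ m →
      br (Jt (n + 1)) (Jt (m + 1))
        = (((m : ℤ) - (n : ℤ) : ℤ) : R) * Jt (m + n + 1)
          + (((m : ℚ) * n) / N) • (Jt (n + 1) * I m - Jt (m + 1) * I n) := by
  intro n m hn hm
  have cq : ∀ (k : ℚ) (x : R), k • x = algebraMap ℚ R k * x := fun k x =>
    Algebra.smul_def k x
  have cn : ∀ (k : ℕ) (x : R), ((k : ℕ) : R) * x = (k : ℚ) • x := fun k x => by
    rw [Algebra.smul_def, map_natCast]
  have cz : ∀ (k : ℤ) (x : R), ((k : ℤ) : R) * x = (k : ℚ) • x := fun k x => by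
    rw [Algebra.smul_def, map_intCast]
  have hq0q0 : br q₀ q₀ = 0 := by
    rw [hq₀, hJJ 1 1 le_rfl le_rfl]; push_cast; ring
  have hq0I : ∀ k : ℕ, 1 ≤ k → br q₀ (I k) = (k : ℚ) • I k := by
    intro k hk
    rw [hq₀, hJI 1 k le_rfl hk]
    have h1 : 1 + k - 1 = k := by omega
    rw [h1, cn]
  have hJq0 : ∀ k : ℕ, 1 ≤ k → br (J (k + 1)) q₀ = -((k : ℚ) • J (k + 1)) := by
    intro k hk
    rw [hq₀, hJJ (k + 1) 1 (by omega) le_rfl]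
    have h1 : k + 1 + 1 - 1 = k + 1 := by omega
    rw [h1, cz]
    simp only [cq, map_intCast, map_natCast, map_neg]
    push_cast; ring
  have hJIk : ∀ a b : ℕ, 1 ≤ a → 1 ≤ b →
      br (J (a + 1)) (I b) = ((a + b : ℚ)) • I (a + b) := by
    intro a b ha hb
    rw [hJI (a + 1) b (by omega) hb]
    have h1 : a + 1 + b - 1 = a + b := by omega
    rw [h1]
    simp only [cq, map_add, map_natCast]
    push_cast; ring
  have hB2 : ∀ a b : ℕ, 1 ≤ a → 1 ≤ b →
      br (J (a + 1)) (q₀ * I b)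
        = ((a + b : ℚ)) • (q₀ * I (a + b)) - (a : ℚ) • (J (a + 1) * I b) := by
    intro a b ha hb
    rw [br_leibniz_right, hJIk a b ha hb, hJq0 a ha]
    simp only [cq, map_add, map_natCast]
    ring
  have hB4 : br (q₀ * I n) (q₀ * I m)
      = ((m : ℚ) - n) • (q₀ * I n * I m) := by
    have hIq : br (I n) (q₀ * I m)
        = -((n : ℚ) • (I n * I m)) := by
      rw [br_leibniz_right, hII n m hn hm, br_anti (I n) q₀, hq0I n hn]
      simp only [cq, map_natCast]; ring
    have hqq : br q₀ (q₀ * I m) = (m : ℚ) • (q₀ * I m) := by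
      rw [br_leibniz_right, hq0I m hm, hq0q0]
      simp only [cq, map_natCast]; ring
    rw [br_leibniz_left, hIq, hqq]
    simp only [cq, map_sub, map_natCast]; ring
  have hB1 : br (J (n + 1)) (J (m + 1))
      = ((m : ℚ) - n) • J (m + n + 1) := by
    rw [hJJ (n + 1) (m + 1) (by omega) (by omega)]
    have h1 : n + 1 + (m + 1) - 1 = m + n + 1 := by omega
    rw [h1, cz]
    simp only [cq, map_intCast, map_sub, map_natCast]
    push_cast; ring
  have hB3 : br (q₀ * I n) (J (m + 1))
      = -(((m + n : ℚ)) • (q₀ * I (m + n)) - (m : ℚ) • (J (m + 1) * I n)) := by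
    rw [br_anti, hB2 m n hm hn]
  rw [hJt n hn, hJt m hm, hJt (m + n) (by omega)]
  simp only [map_sub, map_smul, LinearMap.sub_apply, LinearMap.smul_apply]
  rw [hB1, hB2 n m hn hm, hB3, hB4, cz]
  simp only [smul_sub, smul_smul, cq, div_eq_mul_inv, map_mul, map_add, map_sub,
    map_neg, map_natCast, map_intCast]
  push_cast
  ring
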